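/- Let v be an odd finite place of a number field K and let a, b, c ∈ K_v with a ≠ 0, v(a) even, v(b) ≥ 0 and v(c) ≥ 0. Then for every x ∈ K_v such that cx² + 1 ≠ 0 and (1+cb²)x² + b² ≠ 0, it is impossible that both (a, cx² + 1)_v = −1 and (a, (1+cb²)x² + b²)_v = −1. Consequently, for every x ∈ K_v with (cx²+1)((1+cb²)x²+b²) ≠ 0, the equation y² − a z² = (cx²+1)((1+cb²)x²+b²) has a solution (y,z) ∈ K_v² whenever (a, cx²+1)_v = (a, (1+cb²)x²+b²)_v. -/

import Mathlib

open IsDedekindDomain IsDedekindDomain.HeightOneSpectrum NumberField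

/-- The normalized additive valuation at a finite place `v` of a number field `K`, defined on
the completion `K_v`, with the convention `v(0) = ⊤`; a uniformizer has valuation `1`. -/
noncomputable def adicAddVal {K : Type*} [Field K] [NumberField K]
    (v : HeightOneSpectrum (𝓞 K)) (x : v.adicCompletion K) : WithTop ℤ :=
  haveI := Classical.dec (x = 0)
  if h : x = 0 then ⊤
  else ((- Multiplicative.toAdd (WithZero.unzero ((Valued.v).ne_zero_iff.mpr h)) : ℤ) : WithTop ℤ)

/-- A finite place `v` of a number field is *odd* if its residue characteristic is
different from 2. -/
def IsOddPlace {K : Type*} [Field K] [NumberField K] (v : HeightOneSpectrum (𝓞 K)) : Prop :=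
  ringChar (𝓞 K ⧸ v.asIdeal) ≠ 2

/-- `HilbertSolvable v a b` says that the Hilbert symbol `(a,b)_v` equals `1`, i.e. the equation
`x₀² - a x₁² - b x₂² = 0` has a solution `(x₀,x₁,x₂) ≠ (0,0,0)` in `K_v³`.
The Hilbert symbol `(a,b)_v` equals `-1` exactly when this fails. -/
def HilbertSolvable {K : Type*} [Field K] [NumberField K] (v : HeightOneSpectrum (𝓞 K))
    (a b : v.adicCompletion K) : Prop :=
  ∃ x₀ x₁ x₂ : v.adicCompletion K, (x₀, x₁, x₂) ≠ (0, 0, 0) ∧ x₀ ^ 2 - a * x₁ ^ 2 - b * x₂ ^ 2 = 0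

/-!
A unit `s` of `K_v` with `‖s - 1‖ < 1` is a square, because `e ↦ (s - 1 - e²) / 2` is a
contraction of the ball of radius `‖s - 1‖` whose fixed point satisfies `(1 + e)² = s`. Hence
`x₀² - u x₁² - w x₂² = 0` is solvable for units `u, w` as soon as it is solvable modulo `v`, which
holds because the residue field is finite of odd characteristic; scaling by squares, `(a, t)_v = 1`
whenever `v(a)` and `v(t)` are both even. With `t₁ = cx² + 1` and
`t₂ = (1 + cb²)x² + b² = b² t₁ + x²`, comparing `v(b² t₁)` with `v(x²)` shows that `v(t₁)` or
`v(t₂)` is even, so the two symbols cannot both be `-1`. If both are `1`, both factors are norms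
from `K_v(√a)`, and so is their product.
-/

section Ultrametric

variable {F : Type*} [NormedField F] [IsUltrametricDist F] [CompleteSpace F]

open Metric Set in
theorem isSquare_of_norm_sub_one_lt_one (h2 : ‖(2 : F)‖ = 1) {s : F} (hs : ‖s - 1‖ < 1) :
    IsSquare s := by
  set d := s - 1 with hd
  set T : F → F := fun e ↦ (d - e ^ 2) / 2
  have hT : ∀ e ∈ closedBall (0 : F) ‖d‖, ∀ e' ∈ closedBall (0 : F) ‖d‖,
      dist (T e) (T e') ≤ ‖d‖ * dist e e' := by
    intro e he e' he'
    rw [mem_closedBall_zero_iff] at he he'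
    have : T e - T e' = (e' - e) * (e' + e) / 2 := by simp only [T]; ring
    rw [dist_eq_norm, this, norm_div, h2, div_one, norm_mul, dist_comm, dist_eq_norm, mul_comm]
    gcongr
    exact (IsUltrametricDist.norm_add_le_max _ _).trans (max_le he' he)
  have hmaps : MapsTo T (closedBall 0 ‖d‖) (closedBall 0 ‖d‖) := by
    intro e he
    rw [mem_closedBall_zero_iff] at he ⊢
    have he2 : ‖-e ^ 2‖ ≤ ‖d‖ := by
      rw [norm_neg, norm_pow]; nlinarith [norm_nonneg e, norm_nonneg d]
    simp only [T, norm_div, h2, div_one, sub_eq_add_neg]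
    exact (IsUltrametricDist.norm_add_le_max _ _).trans (max_le le_rfl he2)
  have hcontr : ContractingWith ‖d‖₊ (hmaps.restrict T _ _) :=
    ⟨hs, LipschitzWith.of_dist_le_mul fun x y ↦ hT x x.2 y y.2⟩
  obtain ⟨e, -, hfix, -⟩ := hcontr.exists_fixedPoint' isClosed_closedBall.isComplete hmaps
    (mem_closedBall_self (norm_nonneg d)) (edist_ne_top _ _)
  have h2ne : (2 : F) ≠ 0 := norm_ne_zero_iff.mp (by rw [h2]; exact one_ne_zero)
  have he : d - e ^ 2 = e * 2 := (div_eq_iff h2ne).mp hfix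
  exact ⟨1 + e, by linear_combination he - hd⟩

theorem isSquare_div_of_norm_sub_lt (h2 : ‖(2 : F)‖ = 1) {x y : F} (h : ‖x - y‖ < ‖y‖) :
    IsSquare (x / y) := by
  have hy : y ≠ 0 := norm_pos_iff.mp ((norm_nonneg _).trans_lt h)
  refine isSquare_of_norm_sub_one_lt_one h2 ?_
  rwa [div_sub_one hy, norm_div, div_lt_one (norm_pos_iff.mpr hy)]

end Ultrametric

theorem Valuation.isSquare_or_isSquare_of_le_one {F Γ₀ : Type*} [Field F]
    [LinearOrderedCommGroupWithZero Γ₀] (w : Valuation F Γ₀) {b c : F} (hb : w b ≤ 1)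
    (hc : w c ≤ 1) (x : F) :
    IsSquare (w (c * x ^ 2 + 1)) ∨ IsSquare (w (b ^ 2 * (c * x ^ 2 + 1) + x ^ 2)) := by
  set t := c * x ^ 2 + 1 with ht
  have hbt : w (b ^ 2 * t) ≤ w t := by
    rw [map_mul]; exact mul_le_of_le_one_left' (by rw [map_pow]; exact pow_le_one' hb 2)
  rcases lt_trichotomy (w (b ^ 2 * t)) (w (x ^ 2)) with hlt | heq | hgt
  · right
    rw [Valuation.map_add_eq_of_lt_right _ hlt, map_pow]
    exact IsSquare.sq _
  · left
    by_cases hb0 : w b = 0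
    · have hx : x = 0 := by simpa [hb0] using heq.symm
      simp [t, hx]
    · rw [map_mul, map_pow, map_pow] at heq
      have : w t = (w x / w b) ^ 2 := by
        rw [div_pow, ← heq, mul_div_cancel_left₀ _ (pow_ne_zero 2 hb0)]
      exact ⟨_, this.trans (sq _)⟩
  · left
    have hcx : w (c * x ^ 2) < w t := by
      rw [map_mul]
      exact (mul_le_of_le_one_left' hc).trans_lt (hgt.trans_le hbt)
    have : w t = 1 := by
      rw [← Valuation.map_sub_eq_of_lt_left w hcx, ht, add_sub_cancel_left, map_one]
    rw [this]; exact IsSquare.one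

theorem Ideal.exists_sq_sub_mul_sq_sub_mem {R : Type*} [CommRing R] (P : Ideal R) [P.IsMaximal]
    [Finite (R ⧸ P)] (hP : ringChar (R ⧸ P) ≠ 2) {u : R} (hu : u ∉ P) (w : R) :
    ∃ α β : R, α ^ 2 - u * β ^ 2 - w ∈ P := by
  let := Ideal.Quotient.field P
  let := Fintype.ofFinite (R ⧸ P)
  have hu' : Ideal.Quotient.mk P u ≠ 0 := by rwa [ne_eq, Ideal.Quotient.eq_zero_iff_mem]
  obtain ⟨A, B, hAB⟩ := FiniteField.exists_root_sum_quadratic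
    (Polynomial.degree_X_pow_sub_C two_pos (Ideal.Quotient.mk P w))
    (Polynomial.degree_C_mul_X_pow 2 (neg_ne_zero.mpr hu'))
    (FiniteField.odd_card_of_char_ne_two hP)
  obtain ⟨α, rfl⟩ := Ideal.Quotient.mk_surjective A
  obtain ⟨β, rfl⟩ := Ideal.Quotient.mk_surjective B
  refine ⟨α, β, Ideal.Quotient.eq_zero_iff_mem.mp ?_⟩
  simp only [Polynomial.eval_sub, Polynomial.eval_pow, Polynomial.eval_X, Polynomial.eval_C,
    Polynomial.eval_mul] at hAB
  simp only [map_sub, map_mul, map_pow]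
  linear_combination hAB

section Completion

variable {K : Type*} [Field K] [NumberField K] {v : HeightOneSpectrum (𝓞 K)}
  {x : v.adicCompletion K}

theorem valued_eq_exp_of_adicAddVal_eq {n : ℤ} (h : adicAddVal v x = n) :
    Valued.v x = WithZero.exp (-n) := by
  have hx : x ≠ 0 := by rintro rfl; simp [adicAddVal] at h
  rw [adicAddVal, dif_neg hx, WithTop.coe_inj] at h
  rw [← h, neg_neg]
  exact (WithZero.coe_unzero _).symm

theorem valued_le_one_of_adicAddVal_nonneg (h : 0 ≤ adicAddVal v x) : Valued.v x ≤ 1 := by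
  by_cases hx : x = 0
  · simp [hx]
  obtain ⟨n, hn⟩ :=
    WithTop.ne_top_iff_exists.mp (show adicAddVal v x ≠ ⊤ by simp [adicAddVal, hx])
  rw [← hn, WithTop.coe_nonneg] at h
  rw [valued_eq_exp_of_adicAddVal_eq hn.symm, ← WithZero.exp_zero, WithZero.exp_le_exp]
  omega

theorem isSquare_valued_of_adicAddVal_eq_two_mul {m : ℤ} (h : adicAddVal v x = (2 * m : ℤ)) :
    IsSquare (Valued.v x) :=
  ⟨WithZero.exp (-m), by rw [valued_eq_exp_of_adicAddVal_eq h, ← WithZero.exp_add]; ring_nf⟩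

theorem norm_two_eq_one_of_isOddPlace (hv : IsOddPlace v) : ‖(2 : v.adicCompletion K)‖ = 1 := by
  have h2 : (2 : 𝓞 K) ∉ v.asIdeal := by
    rw [← Ideal.Quotient.eq_zero_iff_mem, map_ofNat]
    exact Ring.two_ne_zero hv
  have := (FinitePlace.norm_eq_one_iff_notMem K v 2).mpr h2
  rwa [map_ofNat, map_ofNat] at this

theorem exists_norm_sub_algebraMap_lt_one {z : v.adicCompletion K} (hz : ‖z‖ ≤ 1) :
    ∃ r : 𝓞 K, ‖z - algebraMap (𝓞 K) (v.adicCompletion K) r‖ < 1 := by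
  obtain ⟨k, hk⟩ := (denseRange_algebraMap K v).exists_dist_lt z one_pos
  have hk1 : v.valuation K k ≤ 1 := by
    rw [← valuedAdicCompletion_eq_valuation', ← Valued.toNormedField.norm_le_one_iff,
      ← dist_zero_right]
    exact (dist_triangle_max _ z _).trans (max_le (dist_comm z _ ▸ hk.le) (by simpa using hz))
  obtain ⟨r, hr⟩ := exists_valuation_sub_lt_of_integer v hk1 1
  rw [Units.val_one, ← valuedAdicCompletion_eq_valuation',
    ← Valued.toNormedField.norm_lt_one_iff] at hr
  refine ⟨r, ?_⟩
  rw [← dist_eq_norm]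
  refine (dist_triangle_max _ (algebraMap K _ k) _).trans_lt (max_lt hk ?_)
  rw [dist_comm, dist_eq_norm]
  rwa [IsScalarTower.algebraMap_apply (𝓞 K) K, ← map_sub]

theorem exists_eq_mul_sq_of_isSquare_valued (hx : x ≠ 0) (h : IsSquare (Valued.v x)) :
    ∃ u r : v.adicCompletion K, ‖u‖ = 1 ∧ r ≠ 0 ∧ x = u * r ^ 2 := by
  obtain ⟨δ, hδ⟩ := h
  obtain ⟨r, rfl⟩ := valuedAdicCompletion_surjective K v δ
  have hr : r ≠ 0 := by rintro rfl; simp_all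
  have hu : Valued.v (x / r ^ 2) = 1 := by
    rw [map_div₀, map_pow, hδ, sq, div_self (by simpa using hr)]
  refine ⟨x / r ^ 2, r, ?_, hr, by field_simp⟩
  exact le_antisymm (Valued.toNormedField.norm_le_one_iff.mpr hu.le)
    (Valued.toNormedField.one_le_norm_iff.mpr hu.ge)

end Completion

namespace HilbertSolvable

variable {K : Type*} [Field K] [NumberField K] {v : HeightOneSpectrum (𝓞 K)}
  {a t : v.adicCompletion K}

theorem mul_sq (h : HilbertSolvable v a t) {r ρ : v.adicCompletion K} (hr : r ≠ 0)
    (hρ : ρ ≠ 0) : HilbertSolvable v (a * r ^ 2) (t * ρ ^ 2) := by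
  obtain ⟨x₀, x₁, x₂, hne, heq⟩ := h
  refine ⟨x₀, x₁ / r, x₂ / ρ, ?_, ?_⟩
  · simpa [div_eq_zero_iff, hr, hρ] using hne
  · field_simp
    linear_combination heq

theorem exists_sq_sub_mul_sq (h : HilbertSolvable v a t) (ha : a ≠ 0) :
    ∃ y z, y ^ 2 - a * z ^ 2 = t := by
  obtain ⟨x₀, x₁, x₂, hne, heq⟩ := h
  have : CharZero (v.adicCompletion K) :=
    charZero_of_injective_ringHom (algebraMap K _).injective
  by_cases hx₂ : x₂ = 0
  · subst hx₂
    have hx₁ : x₁ ≠ 0 := by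
      rintro rfl
      exact hne (by simpa using heq)
    obtain ⟨s, rfl⟩ : ∃ s, a = s ^ 2 := ⟨x₀ / x₁, by field_simp; linear_combination -heq⟩
    have hs : s ≠ 0 := by rintro rfl; simp at ha
    -- `((t + 1) / 2) ^ 2 - ((t - 1) / 2) ^ 2 = t`
    exact ⟨(t + 1) / 2, (1 - t) / (2 * s), by field_simp; ring⟩
  · exact ⟨x₀ / x₂, x₁ / x₂, by field_simp; linear_combination heq⟩

theorem of_norm_sq_sub_mul_sq_sub_lt_one (h2 : ‖(2 : v.adicCompletion K)‖ = 1)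
    {u w α β : v.adicCompletion K} (hw : ‖w‖ = 1) (hα : ‖α‖ ≤ 1)
    (h : ‖α ^ 2 - u * β ^ 2 - w‖ < 1) : HilbertSolvable v u w := by
  -- if `α` is a unit then `(u β² + w) / α²` is a square, otherwise `-w / (u β²)` is
  rcases hα.lt_or_eq with hα | hα
  · have hsum : ‖u * β ^ 2 + w‖ < 1 := by
      rw [show u * β ^ 2 + w = α ^ 2 + -(α ^ 2 - u * β ^ 2 - w) by ring]
      refine (IsUltrametricDist.norm_add_le_max _ _).trans_lt (max_lt ?_ (by rwa [norm_neg]))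
      rw [norm_pow]
      nlinarith [norm_nonneg α]
    have hy : ‖u * β ^ 2‖ = 1 := hw ▸
      IsUltrametricDist.norm_eq_of_add_norm_lt_max (hsum.trans_le (hw ▸ le_max_right _ _))
    obtain ⟨σ, hσ⟩ := isSquare_div_of_norm_sub_lt h2 (x := -w) (y := u * β ^ 2)
      (by rwa [hy, ← norm_neg, neg_sub, sub_neg_eq_add])
    rw [div_eq_iff (norm_ne_zero_iff.mp (hy.trans_ne one_ne_zero))] at hσ
    exact ⟨0, β * σ, 1, by simp, by linear_combination hσ⟩
  · obtain ⟨σ, hσ⟩ := isSquare_div_of_norm_sub_lt h2 (x := u * β ^ 2 + w) (y := α ^ 2)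
      (by rwa [norm_pow, hα, one_pow, ← norm_neg, neg_sub, sub_add_eq_sub_sub])
    rw [div_eq_iff (pow_ne_zero 2 (norm_ne_zero_iff.mp (hα.trans_ne one_ne_zero)))] at hσ
    exact ⟨α * σ, β, 1, by simp, by linear_combination -hσ⟩

theorem of_norm_eq_one (hv : IsOddPlace v) {u w : v.adicCompletion K} (hu : ‖u‖ = 1)
    (hw : ‖w‖ = 1) : HilbertSolvable v u w := by
  set ι := algebraMap (𝓞 K) (v.adicCompletion K)
  obtain ⟨u₀, hu₀⟩ := exists_norm_sub_algebraMap_lt_one hu.le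
  obtain ⟨w₀, hw₀⟩ := exists_norm_sub_algebraMap_lt_one hw.le
  have hu₀v : u₀ ∉ v.asIdeal := by
    rw [← FinitePlace.norm_eq_one_iff_notMem K, ← hu]
    change ‖ι u₀‖ = ‖u‖
    have hlt : ‖-(u - ι u₀)‖ < ‖u‖ := by rwa [norm_neg, hu]
    rw [show ι u₀ = u + -(u - ι u₀) by ring,
      IsUltrametricDist.norm_add_eq_max_of_norm_ne_norm hlt.ne', max_eq_left hlt.le]
  obtain ⟨α, β, hαβ⟩ := v.asIdeal.exists_sq_sub_mul_sq_sub_mem hv hu₀v w₀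
  rw [← FinitePlace.norm_lt_one_iff_mem K] at hαβ
  refine of_norm_sq_sub_mul_sq_sub_lt_one (norm_two_eq_one_of_isOddPlace hv) hw
    (α := ι α) (β := ι β) (FinitePlace.norm_le_one K v α) ?_
  have hβ : ‖ι β‖ ^ 2 ≤ 1 := pow_le_one₀ (norm_nonneg _) (FinitePlace.norm_le_one K v β)
  rw [show ι α ^ 2 - u * ι β ^ 2 - w
      = ι (α ^ 2 - u₀ * β ^ 2 - w₀) + ((ι u₀ - u) * ι β ^ 2 + (ι w₀ - w)) by
    simp only [map_sub, map_mul, map_pow]; ring]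
  refine (IsUltrametricDist.norm_add_le_max _ _).trans_lt (max_lt hαβ
    ((IsUltrametricDist.norm_add_le_max _ _).trans_lt (max_lt ?_ (by rwa [norm_sub_rev]))))
  rw [norm_mul, norm_pow, norm_sub_rev]
  exact mul_lt_one_of_nonneg_of_lt_one_left (norm_nonneg _) hu₀ hβ

theorem of_isSquare_valued (hv : IsOddPlace v) (ha : a ≠ 0) (ht : t ≠ 0)
    (ha_sq : IsSquare (Valued.v a)) (ht_sq : IsSquare (Valued.v t)) :
    HilbertSolvable v a t := by
  obtain ⟨u, r, hu, hr, rfl⟩ := exists_eq_mul_sq_of_isSquare_valued ha ha_sq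
  obtain ⟨w, ρ, hw, hρ, rfl⟩ := exists_eq_mul_sq_of_isSquare_valued ht ht_sq
  exact (of_norm_eq_one hv hu hw).mul_sq hr hρ

end HilbertSolvable

/-- Let `v` be an odd finite place of a number field `K` and `a, b, c ∈ K_v` with
`a ≠ 0`, `v(a)` even, `v(b) ≥ 0` and `v(c) ≥ 0`. Then for every `x ∈ K_v` such that
`cx² + 1 ≠ 0` and `(1+cb²)x² + b² ≠ 0`, it is impossible that both `(a, cx² + 1)_v = -1` and
`(a, (1+cb²)x² + b²)_v = -1`. Consequently, for every `x` with
`(cx²+1)((1+cb²)x²+b²) ≠ 0`, the equation `y² - a z² = (cx²+1)((1+cb²)x²+b²)` has a solution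
`(y,z) ∈ K_v²` whenever `(a, cx²+1)_v = (a, (1+cb²)x²+b²)_v`. -/
theorem chatelet_factors_not_both_neg_one_of_even_val
    {K : Type*} [Field K] [NumberField K] (v : HeightOneSpectrum (𝓞 K))
    (hv : IsOddPlace v) (a b c : v.adicCompletion K) (ha : a ≠ 0)
    (hva : ∃ m : ℤ, adicAddVal v a = (2 * m : ℤ))
    (hvb : 0 ≤ adicAddVal v b) (hvc : 0 ≤ adicAddVal v c) :
    (∀ x : v.adicCompletion K, c * x ^ 2 + 1 ≠ 0 → (1 + c * b ^ 2) * x ^ 2 + b ^ 2 ≠ 0 →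
      ¬(¬HilbertSolvable v a (c * x ^ 2 + 1) ∧
        ¬HilbertSolvable v a ((1 + c * b ^ 2) * x ^ 2 + b ^ 2))) ∧
    (∀ x : v.adicCompletion K, (c * x ^ 2 + 1) * ((1 + c * b ^ 2) * x ^ 2 + b ^ 2) ≠ 0 →
      (HilbertSolvable v a (c * x ^ 2 + 1) ↔
        HilbertSolvable v a ((1 + c * b ^ 2) * x ^ 2 + b ^ 2)) →
      ∃ y z : v.adicCompletion K,
        y ^ 2 - a * z ^ 2 = (c * x ^ 2 + 1) * ((1 + c * b ^ 2) * x ^ 2 + b ^ 2)) := by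
  obtain ⟨m, hm⟩ := hva
  have ha_sq := isSquare_valued_of_adicAddVal_eq_two_mul hm
  have not_both : ∀ x : v.adicCompletion K, c * x ^ 2 + 1 ≠ 0 →
      (1 + c * b ^ 2) * x ^ 2 + b ^ 2 ≠ 0 → ¬(¬HilbertSolvable v a (c * x ^ 2 + 1) ∧
        ¬HilbertSolvable v a ((1 + c * b ^ 2) * x ^ 2 + b ^ 2)) := by
    rintro x h₁ h₂ ⟨hn₁, hn₂⟩
    rw [show (1 + c * b ^ 2) * x ^ 2 + b ^ 2 = b ^ 2 * (c * x ^ 2 + 1) + x ^ 2 by ring]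
      at h₂ hn₂
    rcases Valued.v.isSquare_or_isSquare_of_le_one (valued_le_one_of_adicAddVal_nonneg hvb)
      (valued_le_one_of_adicAddVal_nonneg hvc) x with h | h
    · exact hn₁ (.of_isSquare_valued hv ha h₁ ha_sq h)
    · exact hn₂ (.of_isSquare_valued hv ha h₂ ha_sq h)
  refine ⟨not_both, fun x hx hiff ↦ ?_⟩
  obtain ⟨h₁, h₂⟩ := mul_ne_zero_iff.mp hx
  have hs₁ : HilbertSolvable v a (c * x ^ 2 + 1) := by
    by_contra hn
    exact not_both x h₁ h₂ ⟨hn, mt hiff.mpr hn⟩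
  obtain ⟨y₁, z₁, e₁⟩ := hs₁.exists_sq_sub_mul_sq ha
  obtain ⟨y₂, z₂, e₂⟩ := (hiff.mp hs₁).exists_sq_sub_mul_sq ha
  exact ⟨y₁ * y₂ + a * z₁ * z₂, y₁ * z₂ + y₂ * z₁, by rw [← e₁, ← e₂]; ring⟩
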